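/- Let Γ be a connected non-complete graph with largest Laplacian eigenvalue μₙ, U a vertex cut with components H₁,…,H_c of Γ−U, and e_i the number of edges from H_i to U. Then ∑_{i=1}^{c} e_i/(μₙ − e_i/|H_i|) ≤ |U|. -/

import Mathlib

/-!
For any `a`, the vector equal to `1` on `U` and to `a i` on `H i` has Laplacian quadratic form
`∑ e i (a i - 1)²` and squared norm `|U| + ∑ |H i| (a i)²`, so the Rayleigh bound for `μₙ` gives
`∑ (e i (a i - 1)² - μₙ |H i| (a i)²) ≤ μₙ |U|` for all `a`. Sending a single `a i` to `-∞`
forces `μₙ > e i / |H i|` (here `e i > 0` because `Γ` is connected and `U` separates it). Each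
summand is then a concave quadratic in `a i` with maximum `μₙ e i / (μₙ - e i / |H i|)`;
substituting the maximizers and dividing by `μₙ` gives the bound.
-/

open Finset Matrix BigOperators

/-- The eigenvalues of a Hermitian matrix, sorted in nondecreasing order. -/
noncomputable def sortedEigs {V : Type*} [Fintype V] [DecidableEq V]
    {A : Matrix V V ℝ} (hA : A.IsHermitian) : Fin (Fintype.card V) → ℝ :=
  (hA.eigenvalues ∘ (Fintype.equivFin V).symm) ∘
    Tuple.sort (hA.eigenvalues ∘ (Fintype.equivFin V).symm)

/-- `eig hA k` is the `(k+1)`-st smallest eigenvalue `μ_{k+1}` of `A` (0 outside range). -/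
noncomputable def eig {V : Type*} [Fintype V] [DecidableEq V]
    {A : Matrix V V ℝ} (hA : A.IsHermitian) (k : ℕ) : ℝ :=
  if h : k < Fintype.card V then sortedEigs hA ⟨k, h⟩ else 0

/-- The number of connected components of `Γ - U`. -/
noncomputable def numComponents {V : Type*} [Fintype V] (G : SimpleGraph V) (U : Finset V) : ℕ :=
  Nat.card (G.induce ((↑U : Set V)ᶜ)).ConnectedComponent

/-- The toughness of a graph. -/
noncomputable def toughness {V : Type*} [Fintype V] (G : SimpleGraph V) : ℝ :=
  sInf {t : ℝ | ∃ U : Finset V, 1 < numComponents G U ∧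
    t = (U.card : ℝ) / (numComponents G U : ℝ)}

/-- The number of vertices of a component `H` of `Γ - U`. -/
noncomputable def compSize {V : Type*} [Fintype V] {G : SimpleGraph V} {U : Finset V}
    (C : (G.induce ((↑U : Set V)ᶜ)).ConnectedComponent) : ℕ :=
  Nat.card C.supp

/-- The number of edges joining a component `H` of `Γ - U` to `U`. -/
noncomputable def edgesToCut {V : Type*} [Fintype V] {G : SimpleGraph V} {U : Finset V}
    (C : (G.induce ((↑U : Set V)ᶜ)).ConnectedComponent) : ℕ :=
  Nat.card {p : ((↑U : Set V)ᶜ : Set V) × V // p.1 ∈ C.supp ∧ p.2 ∈ U ∧ G.Adj p.1.1 p.2}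

lemma eigenvalues_le_eig_last {V : Type*} [Fintype V] [DecidableEq V]
    {A : Matrix V V ℝ} (hA : A.IsHermitian) (i : V) :
    hA.eigenvalues i ≤ eig hA (Fintype.card V - 1) := by
  set f := hA.eigenvalues ∘ (Fintype.equivFin V).symm
  set k := (Tuple.sort f).symm (Fintype.equivFin V i)
  have hlast : Fintype.card V - 1 < Fintype.card V := by have := k.isLt; omega
  have hi : hA.eigenvalues i = (f ∘ Tuple.sort f) k := by simp [f, k]
  rw [eig, dif_pos hlast, sortedEigs, hi]
  exact Tuple.monotone_sort f
    (show k ≤ ⟨_, hlast⟩ from Fin.le_def.mpr (by have := k.isLt; simp only; omega))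

open scoped MatrixOrder in
lemma dotProduct_mulVec_le_eig_last_mul {V : Type*} [Fintype V] [DecidableEq V]
    {A : Matrix V V ℝ} (hA : A.IsHermitian) (x : V → ℝ) :
    x ⬝ᵥ A *ᵥ x ≤ eig hA (Fintype.card V - 1) * (x ⬝ᵥ x) := by
  have hle : A ≤ algebraMap ℝ _ (eig hA (Fintype.card V - 1)) :=
    le_algebraMap_of_spectrum_le (fun μ hμ => by
      obtain ⟨i, rfl⟩ := hA.spectrum_real_eq_range_eigenvalues ▸ hμ
      exact eigenvalues_le_eig_last hA i) hA.isSelfAdjoint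
  have := (Matrix.le_iff.mp hle).dotProduct_mulVec_nonneg x
  simp only [star_trivial, Algebra.algebraMap_eq_smul_one, sub_mulVec, smul_mulVec, one_mulVec,
    dotProduct_sub, dotProduct_smul, smul_eq_mul] at this
  linarith

section QuadraticBound

variable {K : Type*} [Fintype K] {e m : K → ℝ} {μ u : ℝ}

lemma lt_mul_of_forall_sum_sq_le [DecidableEq K] (h : ∀ a : K → ℝ,
      ∑ C, e C * (a C - 1) ^ 2 ≤ μ * (u + ∑ C, m C * a C ^ 2))
    {C : K} (he : 0 < e C) : e C < μ * m C := by
  by_contra! hle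
  set B := μ * (u + ∑ C', m C' - m C)
  -- with `t` on `C` and `1` elsewhere, `hle` turns `h` into `e C (1 - 2t) ≤ B`, false for this `t`
  set t := (e C - B - 1) / (2 * e C)
  have ht_eq : e C - 2 * e C * t = B + 1 := by simp only [t]; field_simp; ring
  have ht := h fun C' => if C' = C then t else 1
  have hleft : ∑ C', e C' * ((if C' = C then t else 1) - 1) ^ 2 = e C * (t - 1) ^ 2 := by
    rw [Finset.sum_eq_single C (fun C' _ hC' => by simp [hC']) (by simp)]
    simp
  have hright : ∑ C', m C' * (if C' = C then t else 1) ^ 2 = ∑ C', m C' + m C * (t ^ 2 - 1) := by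
    rw [← Finset.sum_add_sum_compl {C}, ← Finset.sum_add_sum_compl {C} m]
    simp only [Finset.sum_singleton, if_pos]
    rw [Finset.sum_congr rfl fun C' hC' => by rw [if_neg (by simpa using hC'), one_pow, mul_one]]
    ring
  rw [hleft, hright] at ht
  nlinarith [mul_le_mul_of_nonneg_right hle (sq_nonneg t)]

lemma sum_div_sub_div_le [Nonempty K] (h : ∀ a : K → ℝ,
      ∑ C, e C * (a C - 1) ^ 2 ≤ μ * (u + ∑ C, m C * a C ^ 2))
    (he : ∀ C, 0 < e C) (hm : ∀ C, 0 < m C) :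
    ∑ C, e C / (μ - e C / m C) ≤ u := by
  classical
  have hgap C : 0 < μ - e C / m C := by
    rw [sub_pos, div_lt_iff₀ (hm C)]
    exact lt_mul_of_forall_sum_sq_le h (he C)
  have hμ : 0 < μ := by
    obtain ⟨C⟩ := ‹Nonempty K›
    linarith [hgap C, div_pos (he C) (hm C)]
  -- `a C` maximizes the concave quadratic `e (a - 1)² - μ m a²`; the maximum is `μ e / (μ - e / m)`
  set a : K → ℝ := fun C => -e C / (m C * (μ - e C / m C))
  have hterm C : e C * (a C - 1) ^ 2 - μ * (m C * a C ^ 2) = μ * (e C / (μ - e C / m C)) := by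
    have hmC := (hm C).ne'
    obtain ⟨D, hD, rfl⟩ : ∃ D, D ≠ 0 ∧ μ = D + e C / m C := ⟨_, (hgap C).ne', by ring⟩
    simp only [a, add_sub_cancel_right]
    field_simp
    ring
  have hsum : μ * ∑ C, e C / (μ - e C / m C) ≤ μ * u := by
    have := h a
    rw [Finset.mul_sum, ← Finset.sum_congr rfl fun C _ => hterm C, Finset.sum_sub_distrib,
      ← Finset.mul_sum]
    linarith
  exact le_of_mul_le_mul_left hsum hμ

end QuadraticBound

lemma sum_sum_eq_two_mul_sum_compl_sum {ι : Type*} [Fintype ι] [DecidableEq ι] (U : Finset ι)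
    (F : ι → ι → ℝ) (hF : ∀ i j, F i j = F j i) (hin : ∀ i ∈ U, ∀ j ∈ U, F i j = 0)
    (hout : ∀ i ∉ U, ∀ j ∉ U, F i j = 0) :
    ∑ i, ∑ j, F i j = 2 * ∑ i ∈ Uᶜ, ∑ j ∈ U, F i j := by
  have hrow_in : ∀ i ∈ U, ∑ j, F i j = ∑ j ∈ Uᶜ, F i j := fun i hi => by
    rw [← Finset.sum_add_sum_compl U, Finset.sum_eq_zero (hin i hi), zero_add]
  have hrow_out : ∀ i ∈ Uᶜ, ∑ j, F i j = ∑ j ∈ U, F i j := fun i hi => by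
    rw [← Finset.sum_add_sum_compl U, Finset.sum_eq_zero fun j hj =>
      hout i (Finset.mem_compl.mp hi) j (Finset.mem_compl.mp hj), add_zero]
  have hcross : ∑ i ∈ U, ∑ j ∈ Uᶜ, F i j = ∑ i ∈ Uᶜ, ∑ j ∈ U, F i j := by
    rw [Finset.sum_comm]
    exact Finset.sum_congr rfl fun i _ => Finset.sum_congr rfl fun j _ => hF j i
  rw [← Finset.sum_add_sum_compl U, Finset.sum_congr rfl hrow_in, Finset.sum_congr rfl hrow_out,
    hcross, two_mul]

section CutVector

variable {V : Type*} [DecidableEq V] {G : SimpleGraph V} {U : Finset V}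

noncomputable def cutVector (a : (G.induce ((↑U : Set V)ᶜ)).ConnectedComponent → ℝ) (v : V) : ℝ :=
  if h : v ∈ U then 1 else a ((G.induce ((↑U : Set V)ᶜ)).connectedComponentMk ⟨v, h⟩)

variable (a : (G.induce ((↑U : Set V)ᶜ)).ConnectedComponent → ℝ)

lemma cutVector_of_mem {v : V} (hv : v ∈ U) : cutVector a v = 1 := dif_pos hv

lemma cutVector_coe (s : ((↑U : Set V)ᶜ : Set V)) :
    cutVector a s = a ((G.induce ((↑U : Set V)ᶜ)).connectedComponentMk s) := dif_neg s.2

variable [Fintype V] [DecidableRel G.Adj]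

lemma sum_compl_eq_sum_subtype (f : V → ℝ) :
    ∑ v ∈ Uᶜ, f v = ∑ s : ((↑U : Set V)ᶜ : Set V), f s :=
  Finset.sum_subtype _ (by simp) f

lemma sum_compSize_mul (f : (G.induce ((↑U : Set V)ᶜ)).ConnectedComponent → ℝ) :
    ∑ C, (compSize C : ℝ) * f C =
      ∑ s : ((↑U : Set V)ᶜ : Set V), f ((G.induce ((↑U : Set V)ᶜ)).connectedComponentMk s) := by
  classical
  rw [← Finset.sum_fiberwise' Finset.univ (G.induce ((↑U : Set V)ᶜ)).connectedComponentMk]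
  refine Finset.sum_congr rfl fun C _ => ?_
  simp only [Finset.sum_const, nsmul_eq_mul, compSize, Nat.card_eq_fintype_card,
    Fintype.card_subtype, SimpleGraph.ConnectedComponent.mem_supp_iff]

lemma sum_edgesToCut_mul (f : (G.induce ((↑U : Set V)ᶜ)).ConnectedComponent → ℝ) :
    ∑ C, (edgesToCut C : ℝ) * f C =
      ∑ s : ((↑U : Set V)ᶜ : Set V), ∑ v ∈ U,
        if G.Adj s v then f ((G.induce ((↑U : Set V)ᶜ)).connectedComponentMk s) else 0 := by
  classical
  set cc := (G.induce ((↑U : Set V)ᶜ)).connectedComponentMk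
  set edges := ({p | p.2 ∈ U ∧ G.Adj p.1 p.2} : Finset (((↑U : Set V)ᶜ : Set V) × V))
  have hcard C : (edgesToCut C : ℝ) = #{p ∈ edges | cc p.1 = C} := by
    rw [edgesToCut, Nat.card_eq_fintype_card, Fintype.card_subtype, Finset.filter_filter]
    congr 2
    ext p
    simp only [Finset.mem_filter, Finset.mem_univ, true_and,
      SimpleGraph.ConnectedComponent.mem_supp_iff, cc]
    tauto
  calc ∑ C, (edgesToCut C : ℝ) * f C = ∑ C, ∑ p ∈ edges with cc p.1 = C, f C := by
        simp [hcard]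
    _ = ∑ p ∈ edges, f (cc p.1) := Finset.sum_fiberwise' edges _ f
    _ = _ := by
        rw [Finset.sum_filter, Fintype.sum_prod_type]
        simp [ite_and, Finset.sum_ite_mem]

lemma cutVector_dotProduct_self :
    cutVector a ⬝ᵥ cutVector a = U.card + ∑ C, (compSize C : ℝ) * a C ^ 2 := by
  rw [dotProduct, ← Finset.sum_add_sum_compl U, sum_compl_eq_sum_subtype, sum_compSize_mul,
    Finset.sum_congr rfl fun v hv => by rw [cutVector_of_mem a hv, mul_one]]
  simp [cutVector_coe, sq]

lemma cutVector_dotProduct_lapMatrix_mulVec :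
    cutVector a ⬝ᵥ G.lapMatrix ℝ *ᵥ cutVector a = ∑ C, (edgesToCut C : ℝ) * (a C - 1) ^ 2 := by
  rw [← toLinearMap₂'_apply', SimpleGraph.lapMatrix_toLinearMap₂' ℝ,
    sum_sum_eq_two_mul_sum_compl_sum U, sum_compl_eq_sum_subtype, sum_edgesToCut_mul]
  · rw [mul_div_cancel_left₀ _ two_ne_zero]
    refine Finset.sum_congr rfl fun s _ => Finset.sum_congr rfl fun v hv => ?_
    rw [cutVector_coe, cutVector_of_mem a hv]
  · intro i j
    simp only [G.adj_comm j i]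
    split_ifs <;> ring
  · intro i hi j hj
    simp [cutVector_of_mem a hi, cutVector_of_mem a hj]
  · intro i hi j hj
    split_ifs with hij
    · have hreach : (G.induce ((↑U : Set V)ᶜ)).Reachable ⟨i, hi⟩ ⟨j, hj⟩ :=
        SimpleGraph.Adj.reachable hij
      rw [cutVector_coe a ⟨i, hi⟩, cutVector_coe a ⟨j, hj⟩,
        SimpleGraph.ConnectedComponent.sound hreach, sub_self, sq, mul_zero]
    · rfl

end CutVector

section Components

variable {V : Type*} [Fintype V] {G : SimpleGraph V} {U : Finset V}

lemma compSize_pos (C : (G.induce ((↑U : Set V)ᶜ)).ConnectedComponent) : 0 < compSize C :=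
  have := C.nonempty_supp.to_subtype
  Nat.card_pos

lemma edgesToCut_pos (hconn : G.Connected) (hcut : 1 < numComponents G U)
    (C : (G.induce ((↑U : Set V)ᶜ)).ConnectedComponent) : 0 < edgesToCut C := by
  set cc := (G.induce ((↑U : Set V)ᶜ)).connectedComponentMk
  have : Nontrivial (G.induce ((↑U : Set V)ᶜ)).ConnectedComponent :=
    Finite.one_lt_card_iff_nontrivial.mp hcut
  obtain ⟨C', hC'⟩ := exists_ne C
  obtain ⟨s, hs⟩ := C.exists_rep
  obtain ⟨t, ht⟩ := C'.exists_rep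
  set X : Set V := {v | ∃ h : v ∉ U, cc ⟨v, h⟩ = C}
  obtain ⟨d, -, hdX, hdX'⟩ := (hconn.preconnected s t).some.exists_boundary_dart X
    ⟨s.2, hs⟩ fun ⟨_, htC⟩ => hC' (ht.symm.trans htC)
  obtain ⟨hfst, hfstC⟩ := hdX
  have hsnd : d.snd ∈ U := by
    by_contra hsnd
    have hadj : (G.induce ((↑U : Set V)ᶜ)).Adj ⟨d.fst, hfst⟩ ⟨d.snd, hsnd⟩ := d.adj
    exact hdX' ⟨hsnd, (SimpleGraph.ConnectedComponent.sound hadj.reachable).symm.trans hfstC⟩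
  have : Nonempty {p : ((↑U : Set V)ᶜ : Set V) × V //
      p.1 ∈ C.supp ∧ p.2 ∈ U ∧ G.Adj p.1.1 p.2} :=
    ⟨⟨(⟨d.fst, hfst⟩, d.snd), hfstC, hsnd, d.adj⟩⟩
  exact Nat.card_pos

end Components

theorem schur_complement_cut_bound_general {V : Type*} [Fintype V] [DecidableEq V]
    (G : SimpleGraph V) [DecidableRel G.Adj]
    (hconn : G.Connected)
    (U : Finset V) (hcut : 1 < numComponents G U) :
    ∑ᶠ C : (G.induce ((↑U : Set V)ᶜ)).ConnectedComponent,
        (edgesToCut C : ℝ) /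
          (eig (Matrix.PosSemidef.isHermitian (G.posSemidef_lapMatrix ℝ)) (Fintype.card V - 1)
            - (edgesToCut C : ℝ) / (compSize C : ℝ))
      ≤ (U.card : ℝ) := by
  have : Nonempty (G.induce ((↑U : Set V)ᶜ)).ConnectedComponent :=
    Nat.card_pos_iff.mp (zero_lt_one.trans hcut) |>.1
  have hrayleigh (a : (G.induce ((↑U : Set V)ᶜ)).ConnectedComponent → ℝ) :=
    cutVector_dotProduct_lapMatrix_mulVec a ▸ cutVector_dotProduct_self a ▸
      dotProduct_mulVec_le_eig_last_mul (G.posSemidef_lapMatrix ℝ).isHermitian (cutVector a)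
  rw [finsum_eq_sum_of_fintype]
  exact sum_div_sub_div_le hrayleigh (fun C => by exact_mod_cast edgesToCut_pos hconn hcut C)
    fun C => by exact_mod_cast compSize_pos C

/-- Schur-complement inequality: `∑_i e_i/(μ_n - e_i/|H_i|) ≤ |U|`. -/
theorem schur_complement_cut_bound {V : Type*} [Fintype V] [DecidableEq V]
    (G : SimpleGraph V) [DecidableRel G.Adj]
    (hconn : G.Connected) (hnc : G ≠ ⊤)
    (U : Finset V) (hcut : 1 < numComponents G U) :
    ∑ᶠ C : (G.induce ((↑U : Set V)ᶜ)).ConnectedComponent,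
        (edgesToCut C : ℝ) /
          (eig (Matrix.PosSemidef.isHermitian (G.posSemidef_lapMatrix ℝ)) (Fintype.card V - 1)
            - (edgesToCut C : ℝ) / (compSize C : ℝ))
      ≤ (U.card : ℝ) :=
  schur_complement_cut_bound_general G hconn U hcut
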